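/- The ε-smoothing of a comparability-satisfying set-valued map preserves comparability: let E : ℝ → Set S (S a finite set) satisfy the comparability condition (for each t, E(t−δ) ⊆ E(t) ⊇ E(t+δ) for all small δ > 0) and have locally finite critical set. Define S_ε E(t) = ⋃_{s ∈ [t−ε, t+ε]} E(s). Then S_ε E also satisfies the comparability condition, i.e., for each t and all sufficiently small δ > 0, S_ε E(t−δ) ⊆ S_ε E(t) ⊇ S_ε E(t+δ). -/
import Mathlib

theorem smoothing_preserves_comparability
    {S : Type*} [Fintype S] (ε : ℝ) (hε : 0 ≤ ε)
    (E : ℝ → Set S)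
    (hcrit : ∀ a b : ℝ, a ≤ b →
      ({t : ℝ | ¬ ∃ δ > 0, ∀ s : ℝ, |s - t| < δ → E s = E t} ∩ Set.Icc a b).Finite)
    (hcomp : ∀ t : ℝ, ∃ δ₀ > 0, ∀ δ : ℝ, 0 < δ → δ < δ₀ →
      E (t - δ) ⊆ E t ∧ E (t + δ) ⊆ E t) :
    ∀ t : ℝ, ∃ δ₀ > 0, ∀ δ : ℝ, 0 < δ → δ < δ₀ →
      (⋃ s ∈ Set.Icc (t - δ - ε) (t - δ + ε), E s) ⊆
        (⋃ s ∈ Set.Icc (t - ε) (t + ε), E s) ∧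
      (⋃ s ∈ Set.Icc (t + δ - ε) (t + δ + ε), E s) ⊆
        (⋃ s ∈ Set.Icc (t - ε) (t + ε), E s) := by
  intro t
  obtain ⟨δ₁, hδ₁, h₁⟩ := hcomp (t - ε)
  obtain ⟨δ₂, hδ₂, h₂⟩ := hcomp (t + ε)
  refine ⟨min δ₁ δ₂, lt_min hδ₁ hδ₂, ?_⟩
  intro δ hδ hδlt
  constructor
  · intro x hx
    simp only [Set.mem_iUnion] at hx ⊢
    obtain ⟨s, hs, hxs⟩ := hx
    by_cases hcase : t - ε ≤ s
    · exact ⟨s, ⟨hcase, by linarith [hs.2]⟩, hxs⟩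
    · push_neg at hcase
      refine ⟨t - ε, ⟨le_refl _, by linarith⟩, ?_⟩
      have hd : 0 < t - ε - s := by linarith
      have h := (h₁ _ hd (by
        have := hs.1
        have := lt_of_lt_of_le hδlt (min_le_left _ _)
        linarith)).1
      have heq : t - ε - (t - ε - s) = s := by ring
      rw [heq] at h
      exact h hxs
  · intro x hx
    simp only [Set.mem_iUnion] at hx ⊢
    obtain ⟨s, hs, hxs⟩ := hx
    by_cases hcase : s ≤ t + ε
    · exact ⟨s, ⟨by linarith [hs.1], hcase⟩, hxs⟩
    · push_neg at hcase
      refine ⟨t + ε, ⟨by linarith, le_refl _⟩, ?_⟩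
      have hd : 0 < s - (t + ε) := by linarith
      have h := (h₂ _ hd (by
        have := hs.2
        have := lt_of_lt_of_le hδlt (min_le_right _ _)
        linarith)).2
      have heq : t + ε + (s - (t + ε)) = s := by ring
      rw [heq] at h
      exact h hxs
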